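/- arXiv:2309.11391 — 2 statements merged into one kernel-verified Lean document; each statement's English description precedes it below -/
import Mathlib

section
/- Let X be a Banach space. Then Δ_X(ε) = Δ_{B_X}(ε) for all 0 < ε < 1, where B_X is the closed unit ball of X. -/
open Filter Topology
open scoped ZeroAtInfty ENNReal NNReal

/-- Increasing `k`-tuples of naturals: the vertices `[ℕ]^k` of the interlacing graph. -/
def IncTuple (k : ℕ) := {f : Fin k → ℕ // StrictMono f}

/-- `m₁ ≤ n₁ ≤ m₂ ≤ n₂ ≤ ⋯ ≤ m_k ≤ n_k`. -/
def InterLE {k : ℕ} (m n : Fin k → ℕ) : Prop :=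
  (∀ i, m i ≤ n i) ∧ ∀ (i : ℕ) (h : i + 1 < k), n ⟨i, Nat.lt_of_succ_lt h⟩ ≤ m ⟨i + 1, h⟩

/-- The pair `(m, n)` interlaces. -/
def Interlacing {k : ℕ} (m n : Fin k → ℕ) : Prop := InterLE m n ∨ InterLE n m

/-- `m₁ ≤ n₁ < m₂ ≤ n₂ < ⋯ < m_k ≤ n_k`. -/
def StrongInterLE {k : ℕ} (m n : Fin k → ℕ) : Prop :=
  (∀ i, m i ≤ n i) ∧ ∀ (i : ℕ) (h : i + 1 < k), n ⟨i, Nat.lt_of_succ_lt h⟩ < m ⟨i + 1, h⟩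

/-- The pair `(m, n)` is strongly interlacing. -/
def StronglyInterlacing {k : ℕ} (m n : Fin k → ℕ) : Prop :=
  StrongInterLE m n ∨ StrongInterLE n m

/-- The interlacing graph on `[ℕ]^k`. -/
def interGraph (k : ℕ) : SimpleGraph (IncTuple k) where
  Adj m n := m ≠ n ∧ Interlacing m.1 n.1
  symm := ⟨fun _ _ h => ⟨h.1.symm, h.2.symm⟩⟩
  loopless := ⟨fun _ h => h.1 rfl⟩

/-- The interlacing graph metric `d_I`. -/
noncomputable def dI {k : ℕ} (m n : IncTuple k) : ℕ := (interGraph k).dist m n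

/-- All entries of the tuple belong to `L`. -/
def memAll {k : ℕ} (L : Set ℕ) (m : IncTuple k) : Prop := ∀ i, m.1 i ∈ L

/-- `m̄ < n̄`: every entry of `m` is below every entry of `n`. -/
def ordLT {k : ℕ} (m n : IncTuple k) : Prop := ∀ i j, m.1 i < n.1 j

/-- Kalton's `Q(ε, δ)`-property of a metric space. -/
def HasQProp (M : Type*) [MetricSpace M] (ε δ : ℝ) : Prop :=
  ∀ (k : ℕ) (f : IncTuple k → M),
    (∀ m n : IncTuple k, dist (f m) (f n) ≤ δ * dI m n) →
    ∃ L : Set ℕ, L.Infinite ∧ ∀ m n : IncTuple k, memAll L m → memAll L n → ordLT m n →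
      dist (f m) (f n) < ε

/-- The modulus `Δ_M(ε)`. -/
noncomputable def DeltaMod (M : Type*) [MetricSpace M] (ε : ℝ) : ℝ :=
  sSup {δ : ℝ | 0 ≤ δ ∧ HasQProp M ε δ}

/-- The constant `q_M`. -/
noncomputable def qMod (M : Type*) [MetricSpace M] : ℝ :=
  sSup {c : ℝ | 0 ≤ c ∧ ∀ ε : ℝ, 0 < ε → c * ε ≤ DeltaMod M ε}

/-- Boundedness of a map into a metric space. -/
def IsBddMap {α : Type*} {M : Type*} [MetricSpace M] (f : α → M) : Prop :=
  ∃ R : ℝ, ∀ x y, dist (f x) (f y) ≤ R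

/-- Property `Q` with constant `C`: every Lipschitz map on an interlacing graph
concentrates on `[L]^k` up to `C·Lip(f)`. -/
def HasPropQConst (M : Type*) [MetricSpace M] (C : ℝ) : Prop :=
  ∀ (k : ℕ) (f : IncTuple k → M) (K : ℝ), 0 ≤ K →
    (∀ m n : IncTuple k, dist (f m) (f n) ≤ K * dI m n) →
    ∃ L : Set ℕ, L.Infinite ∧ ∀ m n : IncTuple k, memAll L m → memAll L n →
      dist (f m) (f n) ≤ C * K

/-- Property `Q`. -/
def HasPropQ (M : Type*) [MetricSpace M] : Prop := ∃ C : ℝ, 0 ≤ C ∧ HasPropQConst M C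

/-- The property `Q` constant `Q_M`. -/
noncomputable def QConst (M : Type*) [MetricSpace M] : ℝ :=
  sInf {C : ℝ | 0 ≤ C ∧ HasPropQConst M C}

theorem compl_card {l m : ℕ} (P : Finset (Fin (l + m))) (hP : P.card = l) : Pᶜ.card = m := by
  rw [Finset.card_compl, hP, Fintype.card_fin]; omega

/-- The increasing subtuple `(n_i : i ∈ P)`. -/
def subTuple {k j : ℕ} (n : Fin k → ℕ) (P : Finset (Fin k)) (h : P.card = j) :
    Fin j → ℕ := fun i => n (P.orderEmbOfFin h i)

/-- The set of distances `d_M(f(n_i : i ∈ P), g(n_i : i ∈ P^c))` over `n̄ ∈ [L]^{l+m}`. -/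
def cutDistSet {l m : ℕ} {M : Type*} [MetricSpace M]
    (f : (Fin l → ℕ) → M) (g : (Fin m → ℕ) → M) (L : Set ℕ)
    (P : Finset (Fin (l + m))) (hP : P.card = l) : Set ℝ :=
  {d : ℝ | ∃ n : Fin (l + m) → ℕ, StrictMono n ∧ (∀ i, n i ∈ L) ∧
    d = dist (f (subTuple n P hP)) (g (subTuple n Pᶜ (compl_card P hP)))}

/-- `C`-cut stability. -/
def CutStableWith (M : Type*) [MetricSpace M] (C : ℝ) : Prop :=
  ∀ (l m : ℕ) (f : (Fin l → ℕ) → M) (g : (Fin m → ℕ) → M),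
    IsBddMap f → IsBddMap g → ∀ L : Set ℕ, L.Infinite →
    ∀ (P Q : Finset (Fin (l + m))) (hP : P.card = l) (hQ : Q.card = l),
      sInf (cutDistSet f g L P hP) ≤ C * sSup (cutDistSet f g L Q hQ)

/-- A permutation of `{1,…,l+m}` preserving the order on `{1,…,l}` and on `{l+1,…,l+m}`. -/
def OrderPreservingPerm {l m : ℕ} (π : Equiv.Perm (Fin (l + m))) : Prop :=
  StrictMono (fun i : Fin l => π (Fin.castAdd m i)) ∧
  StrictMono (fun j : Fin m => π (Fin.natAdd l j))

/-- Distances `d_M(f(n_{π(1)},…,n_{π(l)}), g(n_{π(l+1)},…,n_{π(l+m)}))` over `n̄ ∈ [L]^{l+m}`. -/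
def permDistSet {l m : ℕ} {M : Type*} [MetricSpace M]
    (f : (Fin l → ℕ) → M) (g : (Fin m → ℕ) → M) (L : Set ℕ)
    (π : Equiv.Perm (Fin (l + m))) : Set ℝ :=
  {d : ℝ | ∃ n : Fin (l + m) → ℕ, StrictMono n ∧ (∀ i, n i ∈ L) ∧
    d = dist (f (fun i => n (π (Fin.castAdd m i)))) (g (fun j => n (π (Fin.natAdd l j))))}

/-- `C`-upper stability. -/
def UpperStableWith (M : Type*) [MetricSpace M] (C : ℝ) : Prop :=
  ∀ (l m : ℕ) (f : (Fin l → ℕ) → M) (g : (Fin m → ℕ) → M),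
    IsBddMap f → IsBddMap g → ∀ L : Set ℕ, L.Infinite →
    ∀ π : Equiv.Perm (Fin (l + m)), OrderPreservingPerm π →
      sInf (permDistSet f g L (Equiv.refl _)) ≤ C * sSup (permDistSet f g L π)

/-- The modulus of continuity `ω_h`. -/
noncomputable def omegaMod {M N : Type*} [MetricSpace M] [MetricSpace N] (h : M → N)
    (t : ℝ) : ℝ≥0∞ :=
  ⨆ p : {p : M × M // dist p.1 p.2 ≤ t}, edist (h p.1.1) (h p.1.2)

/-- The compression modulus `ρ_h`. -/
noncomputable def rhoMod {M N : Type*} [MetricSpace M] [MetricSpace N] (h : M → N)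
    (t : ℝ) : ℝ≥0∞ :=
  ⨅ p : {p : M × M // t ≤ dist p.1 p.2}, edist (h p.1.1) (h p.1.2)

/-- A coarse embedding, expressed via the moduli. -/
def CoarseEmbMod {M N : Type*} [MetricSpace M] [MetricSpace N] (h : M → N) : Prop :=
  (∀ t : ℝ, omegaMod h t < ⊤) ∧ Tendsto (rhoMod h) atTop (𝓝 ⊤)

/-- A uniform embedding, expressed via the moduli. -/
def UniformEmbMod {M N : Type*} [MetricSpace M] [MetricSpace N] (h : M → N) : Prop :=
  Tendsto (omegaMod h) (𝓝[>] (0 : ℝ)) (𝓝 0) ∧ ∀ t : ℝ, 0 < t → 0 < rhoMod h t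

/-- A free ultrafilter on `ℕ`. -/
def FreeUF (U : Ultrafilter ℕ) : Prop := (U : Filter ℕ) ≤ Filter.cofinite

/-- The iterated ultrafilter limit `lim_{n₁,U₁} ⋯ lim_{n_k,U_k} F(n₁,…,n_k)`. -/
noncomputable def ultraLim : (k : ℕ) → (Fin k → Ultrafilter ℕ) → ((Fin k → ℕ) → ℝ) → ℝ
  | 0, _, F => F (fun i => i.elim0)
  | k + 1, U, F => ultraLim k (fun i => U i.castSucc)
      (fun n => limUnder (U (Fin.last k)) (fun j => F (Fin.snoc n j)))

/-- An unrooted (countably branching) tree of height `k` in `X`. -/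
def TreeU (X : Type*) (k : ℕ) := (i : Fin k) → (Fin (i.1 + 1) → ℕ) → X

/-- A rooted (countably branching) tree of height `k` in `X`. -/
def TreeR (X : Type*) (k : ℕ) := (i : Fin (k + 1)) → (Fin i.1 → ℕ) → X

/-- A normalized unrooted tree takes values in the unit sphere. -/
def NormalizedU {X : Type*} [NormedAddCommGroup X] {k : ℕ} (t : TreeU X k) : Prop :=
  ∀ i v, ‖t i v‖ = 1

/-- A normalized rooted tree takes values in the unit sphere. -/
def NormalizedR {X : Type*} [NormedAddCommGroup X] {k : ℕ} (t : TreeR X k) : Prop :=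
  ∀ i v, ‖t i v‖ = 1

/-- `∀_{U₁} n₁ ⋯ ∀_{U_j} n_j, P(n₁,…,n_j)`. -/
def iterEventually : (j : ℕ) → (Fin j → Ultrafilter ℕ) → ((Fin j → ℕ) → Prop) → Prop
  | 0, _, P => P (fun i => i.elim0)
  | j + 1, U, P => iterEventually j (fun i => U i.castSucc)
      (fun n => ∀ᶠ a in U (Fin.last j), P (Fin.snoc n a))

/-- An unrooted tree is `Ū`-weakly null. -/
def WeaklyNullU {X : Type*} [NormedAddCommGroup X] [NormedSpace ℝ X] {k : ℕ}
    (U : Fin k → Ultrafilter ℕ) (t : TreeU X k) : Prop :=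
  ∀ i : Fin k, iterEventually i.1 (fun j => U (Fin.castLE i.isLt.le j))
    (fun pre => ∀ φ : X →L[ℝ] ℝ,
      Tendsto (fun a : ℕ => φ (t i (Fin.snoc pre a))) (U i) (𝓝 0))

/-- A rooted tree is `Ū`-weakly null. -/
def WeaklyNullR {X : Type*} [NormedAddCommGroup X] [NormedSpace ℝ X] {k : ℕ}
    (U : Fin k → Ultrafilter ℕ) (t : TreeR X k) : Prop :=
  ∀ i : Fin k, iterEventually i.1 (fun j => U (Fin.castLE i.isLt.le j))
    (fun pre => ∀ φ : X →L[ℝ] ℝ,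
      Tendsto (fun a : ℕ => φ (t i.succ (Fin.snoc pre a))) (U i) (𝓝 0))

/-- The norm `N_t^{Ū}(x ⊕ Σ aᵢ eᵢ)`. -/
noncomputable def treeNorm {X : Type*} [NormedAddCommGroup X] [NormedSpace ℝ X] {k : ℕ}
    (U : Fin k → Ultrafilter ℕ) (t : TreeU X k) (x : X) (a : Fin k → ℝ) : ℝ :=
  ultraLim k U (fun n => ‖x + ∑ i : Fin k, a i • t i (fun j => n (Fin.castLE i.isLt j))‖)

/-- The number of elements of `P` that are `≤ j`. -/
def rankIn {k : ℕ} (P : Finset (Fin k)) (j : Fin k) : ℕ :=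
  (P.filter (fun i => i ≤ j)).card

/-- The `P`-intertwining `s ⊛_P t` of two trees. -/
def intertwine {X : Type*} {l m : ℕ} (P : Finset (Fin (l + m))) (hP : P.card = l)
    (s : TreeU X l) (t : TreeU X m) : TreeU X (l + m) := fun j v =>
  let v' : Fin (l + m) → ℕ := fun p => if h : p.1 < j.1 + 1 then v ⟨p.1, h⟩ else 0
  if hj : j ∈ P then
    s ⟨rankIn P j - 1, by
        have h1 : 0 < rankIn P j :=
          Finset.card_pos.mpr ⟨j, Finset.mem_filter.mpr ⟨hj, le_refl j⟩⟩
        have h2 : rankIn P j ≤ l := (Finset.card_filter_le P _).trans hP.le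
        omega⟩
      (fun b => v' (P.orderEmbOfFin hP ⟨b.1, by
        have h1 : 0 < rankIn P j :=
          Finset.card_pos.mpr ⟨j, Finset.mem_filter.mpr ⟨hj, le_refl j⟩⟩
        have h2 : rankIn P j ≤ l := (Finset.card_filter_le P _).trans hP.le
        have h3 := b.isLt
        omega⟩))
  else
    t ⟨rankIn Pᶜ j - 1, by
        have h1 : 0 < rankIn Pᶜ j :=
          Finset.card_pos.mpr ⟨j, Finset.mem_filter.mpr ⟨Finset.mem_compl.mpr hj, le_refl j⟩⟩
        have h2 : rankIn Pᶜ j ≤ m := (Finset.card_filter_le Pᶜ _).trans (compl_card P hP).le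
        omega⟩
      (fun b => v' (Pᶜ.orderEmbOfFin (compl_card P hP) ⟨b.1, by
        have h1 : 0 < rankIn Pᶜ j :=
          Finset.card_pos.mpr ⟨j, Finset.mem_filter.mpr ⟨Finset.mem_compl.mpr hj, le_refl j⟩⟩
        have h2 : rankIn Pᶜ j ≤ m := (Finset.card_filter_le Pᶜ _).trans (compl_card P hP).le
        have h3 := b.isLt
        omega⟩))

/-- The unrooted part of a rooted tree. -/
def unroot {X : Type*} {k : ℕ} (t : TreeR X k) : TreeU X k := fun i v => t i.succ v

/-- The summing basis of `c₀`. -/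
noncomputable def summingBasis (n : ℕ) : C₀(ℕ, ℝ) :=
  ⟨⟨fun x => if x ≤ n then 1 else 0, continuous_of_discreteTopology⟩, by
    rw [cocompact_eq_cofinite, Nat.cofinite_eq_atTop]
    refine (tendsto_congr' ?_).mpr tendsto_const_nhds
    filter_upwards [eventually_gt_atTop n] with x hx
    simp [if_neg (Nat.not_le.mpr hx)]⟩

/-- The canonical map `[ℕ]^k → c₀`, `n̄ ↦ Σᵢ s_{nᵢ}`. -/
noncomputable def interMap {k : ℕ} (m : Fin k → ℕ) : C₀(ℕ, ℝ) :=
  ∑ i : Fin k, summingBasis (m i)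

/-- Krivine–Maurey stability of a metric space. -/
def StableSpace (M : Type*) [MetricSpace M] : Prop :=
  ∀ U V : Ultrafilter ℕ, FreeUF U → FreeUF V →
    ∀ x y : ℕ → M, Bornology.IsBounded (Set.range x) → Bornology.IsBounded (Set.range y) →
      limUnder (U : Filter ℕ) (fun a => limUnder (V : Filter ℕ) (fun b => dist (x a) (y b)))
        = limUnder (V : Filter ℕ) (fun b => limUnder (U : Filter ℕ) (fun a => dist (x a) (y b)))

/-!
Restricting to `B_X` can only help, so only `Q(ε, δ)` for `B_X` ⇒ `Q(ε, δ)` for `X` needs an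
argument. The interlacing graph on `[ℕ]^k` has diameter at most `2k`, so a `δ`-Lipschitz
`f : [ℕ]^k → X` stays within some radius `s` of a point `c`. If `s ≥ 1`, then `(f - c) / s` maps
into `B_X` and is still `δ`-Lipschitz, so `Q(ε, δ)` for `B_X` gives an infinite `L` with
`‖f m̄ - f n̄‖ < ε s` for `m̄ < n̄` in `[L]^k`. Fixing `w̄ ∈ [L]^k` and keeping only the tuples
of `L` lying above `w̄`, `f` now stays within `ε s` of `f w̄`, and restricting to a subset of `ℕ`
keeps `f` `δ`-Lipschitz. Since `ε < 1`, after finitely many rounds the radius is at most `1`,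
and one more application of `Q(ε, δ)` for `B_X` gives concentration at level `ε`.
-/

namespace IncTuple

variable {k : ℕ}

def map (e : ℕ → ℕ) (he : StrictMono e) (m : IncTuple k) : IncTuple k :=
  ⟨fun i => e (m.1 i), he.comp m.2⟩

def init (k : ℕ) : IncTuple k := ⟨Fin.val, Fin.val_strictMono⟩

lemma exists_map_eq_of_memAll_image {e : ℕ → ℕ} (he : StrictMono e) {L : Set ℕ}
    {m : IncTuple k} (hm : memAll (e '' L) m) :
    ∃ m' : IncTuple k, memAll L m' ∧ map e he m' = m := by
  choose a haL hae using hm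
  refine ⟨⟨a, fun i j hij => he.lt_iff_lt.mp ?_⟩, haL, Subtype.ext (funext hae)⟩
  rw [hae, hae]
  exact m.2 hij

lemma exists_ordLT_both (m n : IncTuple k) : ∃ u : IncTuple k, ordLT m u ∧ ordLT n u := by
  set B := Finset.univ.sup fun i => max (m.1 i) (n.1 i)
  have hle (i : Fin k) : max (m.1 i) (n.1 i) ≤ B :=
    Finset.le_sup (f := fun i => max (m.1 i) (n.1 i)) (Finset.mem_univ i)
  refine ⟨⟨fun i => B + 1 + i, fun a b hab => by simpa using hab⟩, fun i j => ?_, fun i j => ?_⟩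
  · have := le_max_left (m.1 i) (n.1 i); have := hle i; simp only; omega
  · have := le_max_right (m.1 i) (n.1 i); have := hle i; simp only; omega

end IncTuple

section InterlacingGraph

open SimpleGraph

variable {k : ℕ}

lemma InterLE.comp_monotone {e : ℕ → ℕ} (he : Monotone e) {m n : Fin k → ℕ}
    (h : InterLE m n) : InterLE (fun i => e (m i)) (fun i => e (n i)) :=
  ⟨fun i => he (h.1 i), fun i hi => he (h.2 i hi)⟩

def interGraphMap (e : ℕ → ℕ) (he : StrictMono e) : interGraph k →g interGraph k where
  toFun := IncTuple.map e he
  map_rel' {m n} h := by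
    refine ⟨fun hmn => h.1 (Subtype.ext (funext fun i => he.injective ?_)), ?_⟩
    · exact congrFun (congrArg Subtype.val hmn) i
    · exact h.2.imp (InterLE.comp_monotone he.monotone) (InterLE.comp_monotone he.monotone)

-- Only positions below `2k` are meaningful; the value `0` beyond is junk.
def concatEntries (m t : IncTuple k) (x : ℕ) : ℕ :=
  if h : x < k then m.1 ⟨x, h⟩ else if h' : x - k < k then t.1 ⟨x - k, h'⟩ else 0

lemma concatEntries_lt {m t : IncTuple k} (H : ordLT m t) {x y : ℕ} (hxy : x < y)
    (hy : y < 2 * k) : concatEntries m t x < concatEntries m t y := by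
  unfold concatEntries
  by_cases hx : x < k
  · by_cases hy' : y < k
    · simp only [dif_pos hx, dif_pos hy']
      exact m.2 (Fin.mk_lt_mk.mpr hxy)
    · have hyk : y - k < k := by omega
      simp only [dif_pos hx, dif_neg hy', dif_pos hyk]
      exact H ⟨x, hx⟩ ⟨y - k, hyk⟩
  · have hxk : x - k < k := by omega
    have hy' : ¬ y < k := by omega
    have hyk : y - k < k := by omega
    simp only [dif_neg hx, dif_pos hxk, dif_neg hy', dif_pos hyk]
    exact t.2 (Fin.mk_lt_mk.mpr (by omega))

def concatWindow {m t : IncTuple k} (H : ordLT m t) (j : ℕ) (hj : j ≤ k) : IncTuple k :=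
  ⟨fun i => concatEntries m t (i + j), fun a b hab => by
    have : a.1 < b.1 := hab
    exact concatEntries_lt H (by omega) (by omega)⟩

lemma concatWindow_zero {m t : IncTuple k} (H : ordLT m t) :
    concatWindow H 0 (Nat.zero_le k) = m :=
  Subtype.ext <| funext fun i => by
    simp only [concatWindow, concatEntries, Nat.add_zero, dif_pos i.2]

lemma concatWindow_self {m t : IncTuple k} (H : ordLT m t) : concatWindow H k le_rfl = t := by
  refine Subtype.ext (funext fun i => ?_)
  have hik : ¬ i.1 + k < k := by omega
  simp only [concatWindow, concatEntries, dif_neg hik, Nat.add_sub_cancel, dif_pos i.2]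

lemma concatWindow_adj {m t : IncTuple k} (H : ordLT m t) (j : ℕ) (hj : j + 1 ≤ k) :
    (interGraph k).Adj (concatWindow H j (by omega)) (concatWindow H (j + 1) hj) := by
  refine ⟨fun heq => ?_, Or.inl ⟨fun i => ?_, fun i hi => ?_⟩⟩
  · have := congrFun (congrArg Subtype.val heq) ⟨k - 1, by omega⟩
    exact (concatEntries_lt H (by omega) (by omega)).ne this
  · exact (concatEntries_lt H (by omega) (by omega : i.1 + (j + 1) < 2 * k)).le
  · show concatEntries m t (i + (j + 1)) ≤ concatEntries m t (i + 1 + j)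
    rw [Nat.add_right_comm, Nat.add_assoc]

lemma exists_walk_concatWindow {m t : IncTuple k} (H : ordLT m t) :
    ∀ (c j : ℕ) (h : j + c = k),
      ∃ p : (interGraph k).Walk (concatWindow H j (by omega)) (concatWindow H k le_rfl),
        p.length ≤ c := by
  intro c
  induction c with
  | zero =>
    intro j h
    obtain rfl : j = k := by omega
    exact ⟨Walk.nil, le_rfl⟩
  | succ c ih =>
    intro j h
    obtain ⟨p, hp⟩ := ih (j + 1) (by omega)
    exact ⟨Walk.cons (concatWindow_adj H j (by omega)) p, by simpa using hp⟩

/-- Sliding a window from `m` to `t` moves one position at a time through interlacing tuples. -/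
lemma exists_walk_of_ordLT {m t : IncTuple k} (H : ordLT m t) :
    ∃ p : (interGraph k).Walk m t, p.length ≤ k := by
  obtain ⟨p, hp⟩ := exists_walk_concatWindow H k 0 (by omega)
  exact ⟨p.copy (concatWindow_zero H) (concatWindow_self H), by simpa using hp⟩

lemma exists_walk_length_le (m n : IncTuple k) :
    ∃ p : (interGraph k).Walk m n, p.length ≤ 2 * k := by
  obtain ⟨u, hmu, hnu⟩ := IncTuple.exists_ordLT_both m n
  obtain ⟨p, hp⟩ := exists_walk_of_ordLT hmu
  obtain ⟨q, hq⟩ := exists_walk_of_ordLT hnu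
  refine ⟨p.append q.reverse, ?_⟩
  rw [Walk.length_append, Walk.length_reverse]
  omega

lemma dI_le (m n : IncTuple k) : dI m n ≤ 2 * k := by
  obtain ⟨p, hp⟩ := exists_walk_length_le m n
  exact (dist_le p).trans hp

lemma dI_map_le {e : ℕ → ℕ} (he : StrictMono e) (m n : IncTuple k) :
    dI (IncTuple.map e he m) (IncTuple.map e he n) ≤ dI m n := by
  obtain ⟨p, _⟩ := exists_walk_length_le m n
  obtain ⟨q, hq⟩ := (Walk.reachable p).exists_walk_length_eq_dist
  calc dI (IncTuple.map e he m) (IncTuple.map e he n)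
      ≤ (q.map (interGraphMap e he)).length := dist_le _
    _ = dI m n := by rw [Walk.length_map, hq]; rfl

end InterlacingGraph

section Concentration

variable {M : Type*} [MetricSpace M] {k : ℕ}

def LipschitzDI (δ : ℝ) (f : IncTuple k → M) : Prop :=
  ∀ m n : IncTuple k, dist (f m) (f n) ≤ δ * dI m n

def Concentrates (ε : ℝ) (f : IncTuple k → M) : Prop :=
  ∃ L : Set ℕ, L.Infinite ∧ ∀ m n : IncTuple k, memAll L m → memAll L n → ordLT m n →
    dist (f m) (f n) < ε

lemma LipschitzDI.dist_le {δ : ℝ} (hδ : 0 ≤ δ) {f : IncTuple k → M} (hf : LipschitzDI δ f)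
    (m n : IncTuple k) : dist (f m) (f n) ≤ δ * (2 * k) :=
  (hf m n).trans (mul_le_mul_of_nonneg_left (by exact_mod_cast dI_le m n) hδ)

lemma LipschitzDI.comp_map {δ : ℝ} (hδ : 0 ≤ δ) {f : IncTuple k → M} (hf : LipschitzDI δ f)
    {e : ℕ → ℕ} (he : StrictMono e) : LipschitzDI δ (f ∘ IncTuple.map e he) := fun m n =>
  (hf _ _).trans (mul_le_mul_of_nonneg_left (by exact_mod_cast dI_map_le he m n) hδ)

lemma Concentrates.of_comp_map {ε : ℝ} {f : IncTuple k → M} {e : ℕ → ℕ} (he : StrictMono e)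
    (h : Concentrates ε (f ∘ IncTuple.map e he)) : Concentrates ε f := by
  obtain ⟨L, hL, hconc⟩ := h
  refine ⟨e '' L, hL.image he.injective.injOn, fun m n hm hn hmn => ?_⟩
  obtain ⟨m', hm'L, rfl⟩ := IncTuple.exists_map_eq_of_memAll_image he hm
  obtain ⟨n', hn'L, rfl⟩ := IncTuple.exists_map_eq_of_memAll_image he hn
  exact hconc m' n' hm'L hn'L fun i j => he.lt_iff_lt.mp (hmn i j)

/-- Enumerate `L` by `g` and keep only the tuples of `L` above `w̄ = (g 0, …, g (k - 1))`. -/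
lemma Concentrates.exists_map_dist_lt {r : ℝ} {f : IncTuple k → M} (h : Concentrates r f) :
    ∃ (e : ℕ → ℕ) (he : StrictMono e) (c : M), ∀ v, dist (f (IncTuple.map e he v)) c < r := by
  obtain ⟨L, hL, hconc⟩ := h
  have hL' : {x | x ∈ L}.Infinite := hL
  set g := Nat.nth (· ∈ L)
  have hg : StrictMono g := Nat.nth_strictMono hL'
  have hshift : StrictMono fun x => g (x + k) := hg.comp fun _ _ h => Nat.add_lt_add_right h k
  refine ⟨_, hshift, f (IncTuple.map g hg (IncTuple.init k)), fun v => ?_⟩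
  rw [dist_comm]
  refine hconc _ _ (fun _ => Nat.nth_mem_of_infinite hL' _) (fun _ => Nat.nth_mem_of_infinite hL' _)
    fun i j => hg ?_
  have := i.2
  simp only [IncTuple.init]
  omega

lemma HasQProp.subtype {ε δ : ℝ} (h : HasQProp M ε δ) (s : Set M) : HasQProp s ε δ :=
  fun k f hf => h k (fun v => (f v : M)) hf

end Concentration

section NormedSpace

variable {X : Type*} [NormedAddCommGroup X] [NormedSpace ℝ X] {k : ℕ} {ε δ : ℝ}

/-- `(f - c) / s` maps into `B_X` and is `δ`-Lipschitz when `s ≥ 1`. -/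
lemma concentrates_mul_of_dist_le (hQ : HasQProp (Metric.closedBall (0 : X) 1) ε δ)
    {f : IncTuple k → X} (hf : LipschitzDI δ f) {c : X} {s : ℝ} (hs : 1 ≤ s)
    (hc : ∀ v, dist (f v) c ≤ s) : Concentrates (ε * s) f := by
  have hs0 : 0 < s := zero_lt_one.trans_le hs
  have hmem (v : IncTuple k) : s⁻¹ • (f v - c) ∈ Metric.closedBall (0 : X) 1 := by
    rw [mem_closedBall_zero_iff, norm_smul, Real.norm_of_nonneg (inv_nonneg.mpr hs0.le),
      ← dist_eq_norm]
    exact inv_mul_le_one_of_le₀ (hc v) hs0.le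
  have hdist (m n : IncTuple k) :
      dist (⟨_, hmem m⟩ : Metric.closedBall (0 : X) 1) ⟨_, hmem n⟩ = s⁻¹ * dist (f m) (f n) := by
    rw [Subtype.dist_eq, dist_smul₀, Real.norm_of_nonneg (inv_nonneg.mpr hs0.le),
      dist_sub_right]
  obtain ⟨L, hL, hconc⟩ := hQ k (fun v => ⟨_, hmem v⟩) fun m n => by
    rw [hdist]
    exact (mul_le_of_le_one_left dist_nonneg (inv_le_one_of_one_le₀ hs)).trans (hf m n)
  refine ⟨L, hL, fun m n hm hn hmn => ?_⟩
  have := hconc m n hm hn hmn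
  rwa [hdist, inv_mul_lt_iff₀ hs0, mul_comm] at this

lemma concentrates_of_dist_le_inv_pow (hε : 0 < ε) (hε1 : ε < 1) (hδ : 0 ≤ δ)
    (hQ : HasQProp (Metric.closedBall (0 : X) 1) ε δ) (N : ℕ) :
    ∀ (f : IncTuple k → X) (c : X), LipschitzDI δ f → (∀ v, dist (f v) c ≤ ε⁻¹ ^ N) →
      Concentrates ε f := by
  induction N with
  | zero =>
    intro f c hf hc
    simpa using concentrates_mul_of_dist_le hQ hf le_rfl (by simpa using hc)
  | succ N ih =>
    intro f c hf hc
    have hconc := concentrates_mul_of_dist_le hQ hf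
      (one_le_pow₀ (one_le_inv₀ hε |>.mpr hε1.le)) hc
    rw [pow_succ', mul_inv_cancel_left₀ hε.ne'] at hconc
    obtain ⟨e, he, c', hc'⟩ := hconc.exists_map_dist_lt
    exact (ih _ c' (hf.comp_map hδ he) fun v => (hc' v).le).of_comp_map he

lemma HasQProp.of_closedBall (hε : 0 < ε) (hε1 : ε < 1) (hδ : 0 ≤ δ)
    (hQ : HasQProp (Metric.closedBall (0 : X) 1) ε δ) : HasQProp X ε δ := by
  intro k f (hf : LipschitzDI δ f)
  obtain ⟨N, hN⟩ := pow_unbounded_of_one_lt (δ * (2 * k)) ((one_lt_inv₀ hε).mpr hε1)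
  exact concentrates_of_dist_le_inv_pow hε hε1 hδ hQ N f (f (IncTuple.init k)) hf
    fun v => (hf.dist_le hδ _ _).trans hN.le

end NormedSpace

theorem stmt6_general (X : Type*) [NormedAddCommGroup X] [NormedSpace ℝ X] :
    ∀ ε : ℝ, 0 < ε → ε < 1 →
      DeltaMod X ε = DeltaMod (Metric.closedBall (0 : X) 1) ε := by
  intro ε hε hε1
  unfold DeltaMod
  congr 1
  ext δ
  exact and_congr_right fun hδ =>
    ⟨fun hQ => hQ.subtype _, HasQProp.of_closedBall hε hε1 hδ⟩

/-- For a Banach space `X`, `Δ_X(ε) = Δ_{B_X}(ε)` for all `0 < ε < 1`. -/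
theorem stmt6 (X : Type*) [NormedAddCommGroup X] [NormedSpace ℝ X] [CompleteSpace X] :
    ∀ ε : ℝ, 0 < ε → ε < 1 →
      DeltaMod X ε = DeltaMod (Metric.closedBall (0 : X) 1) ε :=
  stmt6_general X
end

section
/- Upper stability, cut stability, and property Q are equivalent for metric spaces: a metric space M has property Q if and only if M is cut stable if and only if M is upper stable. -/
open Filter Topology
open scoped ZeroAtInfty ENNReal NNReal

/-!
Property `Q` ⇒ cut stability. Enumerate `L` by `e` and let `S` be the supremum for the cut `Q`.
When `u, v` interlace, `f(e(2u)|_Q)` and `f(e(2v)|_Q)` are both `Q`-cut partners of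
`g(e(2u+1)|_{Qᶜ})`, so `y ↦ f(e(2y)|_Q)` is `2S`-Lipschitz for `d_I`, and property `Q` makes it
`2CS`-almost constant on some `[L']^k`. Spreading the pattern of any cut `P` along `L'` (with room
for the positions of `Q` in between) gives a `P`-configuration and a `Q`-configuration with the same
`g`-part whose `f`-parts are values of that map, whence `inf_P ≤ (2C + 1) S`.

Cut stability ⇒ upper stability: an order-preserving permutation is a cut.

Upper stability ⇒ property `Q`. By Ramsey's theorem, `d(f(m̄), f(n̄))` for `m̄ < n̄` in `[L]^k` is
constant up to `Lip(f)` for some infinite `L`. For the alternating pattern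
`m₁ < n₁ < m₂ < ⋯ < n_k` the tuples `m̄, n̄` are adjacent in the interlacing graph, so upper
stability bounds the infimum, hence every value, by `(C + 1) Lip(f)`; compare two tuples through
a third one lying above both.
-/

lemma dist_le_mul_walk_length {V M : Type*} [MetricSpace M] {G : SimpleGraph V}
    {φ : V → M} {K : ℝ} (hφ : ∀ a b, G.Adj a b → dist (φ a) (φ b) ≤ K) {u v : V}
    (w : G.Walk u v) : dist (φ u) (φ v) ≤ K * w.length := by
  induction w with
  | nil => simp
  | @cons a b c hab w ih =>
    calc dist (φ a) (φ c) ≤ dist (φ a) (φ b) + dist (φ b) (φ c) := dist_triangle _ _ _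
      _ ≤ K + K * w.length := add_le_add (hφ a b hab) ih
      _ = K * (w.cons hab).length := by rw [SimpleGraph.Walk.length_cons]; push_cast; ring

lemma dist_le_mul_graph_dist {V M : Type*} [MetricSpace M]
    {G : SimpleGraph V} (hG : G.Preconnected) {φ : V → M} {K : ℝ}
    (hφ : ∀ a b, G.Adj a b → dist (φ a) (φ b) ≤ K) (u v : V) :
    dist (φ u) (φ v) ≤ K * G.dist u v := by
  obtain ⟨w, hw⟩ := (hG u v).exists_walk_length_eq_dist
  simpa [hw] using dist_le_mul_walk_length hφ w

lemma Interlacing.exists_walk {k : ℕ} {u v : IncTuple k} (h : Interlacing u.1 v.1) :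
    ∃ w : (interGraph k).Walk u v, w.length ≤ 1 := by
  by_cases huv : u = v
  · subst huv
    exact ⟨.nil, by simp⟩
  · exact ⟨(show (interGraph k).Adj u v from ⟨huv, h⟩).toWalk, by simp⟩

lemma dI_le_one_of_interlacing {k : ℕ} {u v : IncTuple k} (h : Interlacing u.1 v.1) :
    dI u v ≤ 1 := by
  obtain ⟨w, hw⟩ := h.exists_walk
  exact (SimpleGraph.dist_le w).trans hw

def window {k : ℕ} (s : ℕ → ℕ) (hs : StrictMono s) (j : ℕ) : IncTuple k :=
  ⟨fun i => s (i + j), fun _ _ h => hs (by simpa using h)⟩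

lemma interLE_window_succ {k : ℕ} (s : ℕ → ℕ) (hs : StrictMono s) (j : ℕ) :
    InterLE (window (k := k) s hs j).1 (window s hs (j + 1)).1 :=
  ⟨fun i => hs.monotone (by omega), fun i _ => le_of_eq (by simp only [window]; congr 1; omega)⟩

lemma exists_walk_window {k : ℕ} (s : ℕ → ℕ) (hs : StrictMono s) (d : ℕ) :
    ∃ w : (interGraph k).Walk (window s hs 0) (window s hs d), w.length ≤ d := by
  induction d with
  | zero => exact ⟨.nil, by simp⟩
  | succ d ih =>
    obtain ⟨w, hw⟩ := ih
    obtain ⟨w', hw'⟩ := Interlacing.exists_walk (Or.inl (interLE_window_succ s hs d))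
    exact ⟨w.append w', by rw [SimpleGraph.Walk.length_append]; omega⟩

def IncTuple.extendSeq {k : ℕ} (y : IncTuple k) (t : ℕ) (p : ℕ) : ℕ :=
  if h : p < k then y.1 ⟨p, h⟩ else t + p

lemma IncTuple.extendSeq_strictMono {k : ℕ} (y : IncTuple k) {t : ℕ} (ht : ∀ i, y.1 i < t) :
    StrictMono (y.extendSeq t) := by
  intro p q hpq
  unfold IncTuple.extendSeq
  split_ifs with hp hq hq
  · exact y.2 (Fin.mk_lt_mk.mpr hpq)
  · exact (ht _).trans_le (Nat.le_add_right _ _)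
  · omega
  · omega

lemma IncTuple.window_extendSeq_zero {k : ℕ} (y : IncTuple k) {t : ℕ} (ht : ∀ i, y.1 i < t) :
    window (y.extendSeq t) (y.extendSeq_strictMono ht) 0 = y := by
  apply Subtype.ext
  funext i
  simp [window, IncTuple.extendSeq]

lemma IncTuple.window_extendSeq_self {k : ℕ} (y : IncTuple k) {t : ℕ} (ht : ∀ i, y.1 i < t) :
    (window (y.extendSeq t) (y.extendSeq_strictMono ht) k).1 = fun i : Fin k => t + (i + k) := by
  funext i
  simp [window, IncTuple.extendSeq]

lemma IncTuple.exists_forall_lt {k : ℕ} (u v : IncTuple k) :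
    ∃ t, ∀ i, u.1 i < t ∧ v.1 i < t :=
  ⟨Finset.univ.sup (fun i => u.1 i + v.1 i) + 1, fun i => by
    have := Finset.le_sup (f := fun i => u.1 i + v.1 i) (Finset.mem_univ i)
    omega⟩

lemma interGraph_exists_walk_length_le (k : ℕ) (u v : IncTuple k) :
    ∃ w : (interGraph k).Walk u v, w.length ≤ 2 * k := by
  obtain ⟨t, ht⟩ := IncTuple.exists_forall_lt u v
  have hu : ∀ i, u.1 i < t := fun i => (ht i).1
  have hv : ∀ i, v.1 i < t := fun i => (ht i).2
  obtain ⟨wu, hwu⟩ := exists_walk_window (k := k) _ (u.extendSeq_strictMono hu) k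
  obtain ⟨wv, hwv⟩ := exists_walk_window (k := k) _ (v.extendSeq_strictMono hv) k
  have hmeet : window (u.extendSeq t) (u.extendSeq_strictMono hu) k =
      window (k := k) (v.extendSeq t) (v.extendSeq_strictMono hv) k :=
    Subtype.ext ((u.window_extendSeq_self hu).trans (v.window_extendSeq_self hv).symm)
  refine ⟨(wu.copy (u.window_extendSeq_zero hu) hmeet).append
    (wv.copy (v.window_extendSeq_zero hv) rfl).reverse, ?_⟩
  simp only [SimpleGraph.Walk.length_append, SimpleGraph.Walk.length_copy,
    SimpleGraph.Walk.length_reverse]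
  omega

lemma interGraph_preconnected (k : ℕ) : (interGraph k).Preconnected := fun u v =>
  ⟨(interGraph_exists_walk_length_le k u v).choose⟩

lemma dI_le_two_mul (k : ℕ) (u v : IncTuple k) : dI u v ≤ 2 * k := by
  obtain ⟨w, hw⟩ := interGraph_exists_walk_length_le k u v
  exact (SimpleGraph.dist_le w).trans hw

lemma dist_le_mul_dI_of_interlacing {M : Type*} [MetricSpace M] {k : ℕ} {φ : IncTuple k → M}
    {K : ℝ} (hφ : ∀ u v : IncTuple k, Interlacing u.1 v.1 → dist (φ u) (φ v) ≤ K)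
    (u v : IncTuple k) : dist (φ u) (φ v) ≤ K * dI u v :=
  dist_le_mul_graph_dist (interGraph_preconnected k) (fun a b hab => hφ a b hab.2) u v

lemma Set.Infinite.exists_strictMono_fin {L : Set ℕ} (hL : L.Infinite) (k N : ℕ) :
    ∃ v : Fin k → ℕ, StrictMono v ∧ (∀ i, v i ∈ L) ∧ ∀ i, N < v i := by
  have hL' : (L \ Set.Iic N).Infinite := hL.sdiff (Set.finite_Iic N)
  refine ⟨fun i => Nat.nth (· ∈ L \ Set.Iic N) i, fun a b hab => Nat.nth_strictMono hL' hab,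
    fun i => (Nat.nth_mem_of_infinite hL' i).1, fun i => ?_⟩
  exact not_le.mp (Nat.nth_mem_of_infinite hL' i).2

lemma strictMono_fin_append {k k' : ℕ} {u : Fin k → ℕ} {w : Fin k' → ℕ} (hu : StrictMono u)
    (hw : StrictMono w) (huw : ∀ i j, u i < w j) : StrictMono (Fin.append u w) := by
  intro p q hpq
  induction p using Fin.addCases with
  | left i =>
    induction q using Fin.addCases with
    | left i' => simpa using hu ((Fin.strictMono_castAdd k').lt_iff_lt.mp hpq)
    | right j' => simpa using huw i j'
  | right j =>
    induction q using Fin.addCases with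
    | left i' => simp [Fin.lt_def] at hpq; omega
    | right j' => simpa using hw ((Fin.strictMono_natAdd k).lt_iff_lt.mp hpq)

theorem exists_infinite_monochromatic {α : Type*} [Finite α] (j : ℕ) :
    ∀ (F : (Fin j → ℕ) → α) (L₀ : Set ℕ), L₀.Infinite →
      ∃ L ⊆ L₀, L.Infinite ∧ ∃ c, ∀ v : Fin j → ℕ, StrictMono v → (∀ i, v i ∈ L) → F v = c := by
  induction j with
  | zero =>
    intro F L₀ hL₀
    exact ⟨L₀, subset_rfl, hL₀, F Fin.elim0, fun v _ _ => congrArg F (funext fun i => i.elim0)⟩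
  | succ j ih =>
    intro F L₀ hL₀
    have key : ∀ S : Set ℕ, S.Infinite → ∃ a, ∃ T ⊆ S, ∃ c, a ∈ S ∧ T.Infinite ∧
        (∀ x ∈ T, a < x) ∧ ∀ v : Fin j → ℕ, StrictMono v → (∀ i, v i ∈ T) →
          F (Fin.cons a v) = c := by
      intro S hS
      obtain ⟨a, ha⟩ := hS.nonempty
      obtain ⟨T, hTS, hT, c, hc⟩ := ih (fun v => F (Fin.cons a v)) _ (hS.sdiff (Set.finite_Iic a))
      exact ⟨a, T, fun x hx => (hTS hx).1, c, ha, hT, fun x hx => not_le.mp (hTS hx).2, hc⟩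
    have : Nonempty α := ⟨F 0⟩
    choose! a T hTS c ha hT hgt hc using key
    set St : ℕ → Set ℕ := fun n => T^[n] L₀
    have hSt_succ : ∀ n, St (n + 1) = T (St n) := fun n => Function.iterate_succ_apply' T n L₀
    have hSt : ∀ n, (St n).Infinite := fun n => by
      induction n with
      | zero => exact hL₀
      | succ n ihn => rw [hSt_succ]; exact hT _ ihn
    have hSt_anti : Antitone St :=
      antitone_nat_of_succ_le fun n => (hSt_succ n).symm ▸ hTS _ (hSt n)
    -- `x n` is the head chosen in the `n`-th refinement `T^[n] L₀`
    set x : ℕ → ℕ := fun n => a (St n)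
    have hx_mem : ∀ n, x n ∈ St n := fun n => ha _ (hSt n)
    have hx_later : ∀ {m n}, m < n → x n ∈ T (St m) := fun {m n} hmn =>
      hSt_succ m ▸ hSt_anti (Nat.succ_le_of_lt hmn) (hx_mem n)
    have hx : StrictMono x := fun m n hmn => hgt _ (hSt m) _ (hx_later hmn)
    obtain ⟨c₀, hc₀⟩ := Finite.exists_infinite_fiber (fun n => c (St n))
    refine ⟨x '' {n | c (St n) = c₀}, ?_, ?_, c₀, ?_⟩
    · rintro _ ⟨n, -, rfl⟩
      exact hSt_anti (Nat.zero_le n) (hx_mem n)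
    · exact (Set.infinite_coe_iff.mp hc₀).image hx.injective.injOn
    · intro v hv hvL
      obtain ⟨n₀, hn₀, hv₀⟩ := hvL 0
      have htail : ∀ i, Fin.tail v i ∈ T (St n₀) := fun i => by
        obtain ⟨n, -, hn⟩ := hvL i.succ
        have : x n₀ < x n := hv₀ ▸ hn ▸ hv (Fin.succ_pos i)
        simpa only [Fin.tail, ← hn] using hx_later (hx.lt_iff_lt.mp this)
      rw [← Fin.cons_self_tail v, ← hv₀, ← hn₀]
      exact hc _ (hSt n₀) _ (hv.comp (Fin.strictMono_succ)) htail

theorem exists_infinite_forall_le_add {j : ℕ} (F : (Fin j → ℕ) → ℝ) {R ε : ℝ} (hε : 0 < ε)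
    (hF : ∀ v, F v ∈ Set.Icc 0 R) :
    ∃ L : Set ℕ, L.Infinite ∧ ∀ v w : Fin j → ℕ, StrictMono v → StrictMono w →
      (∀ i, v i ∈ L) → (∀ i, w i ∈ L) → F v ≤ F w + ε := by
  -- colour a tuple by the interval `[nε, (n+1)ε)` containing its value
  let colour : (Fin j → ℕ) → Fin (⌊R / ε⌋₊ + 1) := fun v =>
    ⟨⌊F v / ε⌋₊, Nat.lt_succ_of_le
      (Nat.floor_le_floor (div_le_div_of_nonneg_right (hF v).2 hε.le))⟩
  obtain ⟨L, -, hL, c, hc⟩ :=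
    exists_infinite_monochromatic j colour Set.univ Set.infinite_univ
  refine ⟨L, hL, fun v w hv hw hvL hwL => ?_⟩
  have hfloor : ⌊F v / ε⌋₊ = ⌊F w / ε⌋₊ := congrArg Fin.val ((hc v hv hvL).trans (hc w hw hwL).symm)
  have h1 : F v / ε < ⌊F w / ε⌋₊ + 1 := hfloor ▸ Nat.lt_floor_add_one _
  have h2 : (⌊F w / ε⌋₊ : ℝ) ≤ F w / ε := Nat.floor_le (div_nonneg (hF w).1 hε.le)
  have h3 : F v / ε < F w / ε + 1 := by linarith
  rw [div_lt_iff₀ hε, add_mul, div_mul_cancel₀ _ hε.ne'] at h3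
  linarith

section Rank

variable {k : ℕ}

lemma rankIn_mono (X : Finset (Fin k)) : Monotone (rankIn X) := fun _ _ h =>
  Finset.card_le_card (Finset.monotone_filter_right X fun _ _ hx => hx.trans h)

lemma rankIn_le_card (X : Finset (Fin k)) (p : Fin k) : rankIn X p ≤ X.card :=
  Finset.card_filter_le _ _

lemma rankIn_lt_rankIn {X : Finset (Fin k)} {p q : Fin k} (hq : q ∈ X) (h : p < q) :
    rankIn X p < rankIn X q := by
  refine Finset.card_lt_card ⟨Finset.monotone_filter_right X fun _ _ hx => hx.trans h.le, ?_⟩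
  intro hsub
  exact (Finset.mem_filter.mp (hsub (Finset.mem_filter.mpr ⟨hq, le_rfl⟩))).2.not_gt h

lemma rankIn_orderEmbOfFin {l : ℕ} (X : Finset (Fin k)) (h : X.card = l) (i : Fin l) :
    rankIn X (X.orderEmbOfFin h i) = i.1 + 1 := by
  have : X.filter (· ≤ X.orderEmbOfFin h i) =
      (Finset.Iic i).map (X.orderEmbOfFin h).toEmbedding := by
    ext x
    simp only [Finset.mem_filter, Finset.mem_map, Finset.mem_Iic]
    constructor
    · rintro ⟨hx, hxi⟩
      obtain ⟨j, rfl⟩ : x ∈ Set.range (X.orderEmbOfFin h) := by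
        rwa [Finset.range_orderEmbOfFin]
      exact ⟨j, (X.orderEmbOfFin h).le_iff_le.mp hxi, rfl⟩
    · rintro ⟨j, hj, rfl⟩
      exact ⟨Finset.orderEmbOfFin_mem X h j, (X.orderEmbOfFin h).le_iff_le.mpr hj⟩
  rw [rankIn, this, Finset.card_map, Fin.card_Iic]

end Rank

lemma exists_strictMono_apply_orderEmb_eq_add {l k : ℕ} (ι : Fin l ↪o Fin k) {δ : Fin l → ℕ}
    (hδ : Monotone δ) : ∃ τ : Fin k → ℕ, StrictMono τ ∧ ∀ i, τ (ι i) = ι i + δ i := by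
  refine ⟨fun p => p + (Finset.univ.filter (ι · ≤ p)).sup δ, fun p q hpq => ?_, fun i => ?_⟩
  · have := Finset.sup_mono (f := δ) (Finset.monotone_filter_right Finset.univ
      fun j _ (h : ι j ≤ p) => h.trans hpq.le)
    exact Nat.add_lt_add_of_lt_of_le hpq this
  · refine congrArg _ (le_antisymm (Finset.sup_le fun j hj => hδ ?_) ?_)
    · exact ι.le_iff_le.mp (Finset.mem_filter.mp hj).2
    · exact Finset.le_sup (Finset.mem_filter.mpr ⟨Finset.mem_univ i, le_rfl⟩)

section CutIndex

variable {k : ℕ}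

/-- The `j`-th element of `Xᶜ` goes to `(k² + 1)(j + 1)`, whatever `X` is; the elements of `X` are
spread `k` apart in between, leaving room to interpolate an increasing tuple through them. -/
def cutIndex (X : Finset (Fin k)) (p : Fin k) : ℕ :=
  (k * k + 1) * rankIn Xᶜ p + if p ∈ X then k * rankIn X p else 0

lemma cutIndex_strictMono (X : Finset (Fin k)) : StrictMono (cutIndex X) := by
  intro p q hpq
  have hc := rankIn_mono Xᶜ hpq.le
  have hX : k * rankIn X p ≤ k * k :=
    Nat.mul_le_mul_left k ((rankIn_le_card X p).trans (card_finset_fin_le X))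
  unfold cutIndex
  by_cases hq : q ∈ X
  · have hr := rankIn_lt_rankIn hq hpq
    have : k * rankIn X p < k * rankIn X q := Nat.mul_lt_mul_of_pos_left (by omega) (by omega)
    split_ifs <;> nlinarith
  · have hr := rankIn_lt_rankIn (Finset.mem_compl.mpr hq) hpq
    split_ifs <;> nlinarith

lemma cutIndex_orderEmbOfFin_compl {m : ℕ} (X : Finset (Fin k)) (hX : Xᶜ.card = m) (j : Fin m) :
    cutIndex X (Xᶜ.orderEmbOfFin hX j) = (k * k + 1) * (j.1 + 1) := by
  have hj := Finset.orderEmbOfFin_mem Xᶜ hX j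
  rw [cutIndex, if_neg (Finset.mem_compl.mp hj), rankIn_orderEmbOfFin, add_zero]

lemma exists_strictMono_comp_eq_cutIndex {l : ℕ} (X Y : Finset (Fin k)) (hX : X.card = l)
    (hY : Y.card = l) : ∃ τ : Fin k → ℕ, StrictMono τ ∧
      ∀ i, τ (Y.orderEmbOfFin hY i) = cutIndex X (X.orderEmbOfFin hX i) := by
  have hval : ∀ i, cutIndex X (X.orderEmbOfFin hX i) =
      (k * k + 1) * rankIn Xᶜ (X.orderEmbOfFin hX i) + k * (i.1 + 1) := fun i => by
    rw [cutIndex, if_pos (Finset.orderEmbOfFin_mem X hX i), rankIn_orderEmbOfFin]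
  obtain ⟨τ, hτ, hτι⟩ := exists_strictMono_apply_orderEmb_eq_add (Y.orderEmbOfFin hY)
    (δ := fun i => cutIndex X (X.orderEmbOfFin hX i) - Y.orderEmbOfFin hY i) (by
      intro i j hij
      rcases hij.lt_or_eq with hij | rfl
      · have hr := rankIn_mono Xᶜ ((X.orderEmbOfFin hX).monotone hij.le)
        have hk := (Y.orderEmbOfFin hY j).isLt
        have : cutIndex X (X.orderEmbOfFin hX i) + k ≤ cutIndex X (X.orderEmbOfFin hX j) := by
          rw [hval, hval]
          have : (i : ℕ) < j := hij
          nlinarith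
        dsimp only
        omega
      · exact le_rfl)
  refine ⟨τ, hτ, fun i => ?_⟩
  have hk := (Y.orderEmbOfFin hY i).isLt
  have : k ≤ cutIndex X (X.orderEmbOfFin hX i) := by rw [hval]; nlinarith
  rw [hτι]
  omega

end CutIndex

lemma interLE_self {k : ℕ} {u : Fin k → ℕ} (hu : Monotone u) : InterLE u u :=
  ⟨fun _ => le_rfl, fun _ _ => hu (Fin.mk_le_mk.mpr (Nat.le_succ _))⟩

lemma InterLE.strictMono_cutMerge {k : ℕ} {a b : Fin k → ℕ} (hab : InterLE a b)
    (ha : StrictMono a) (hb : StrictMono b) (X : Finset (Fin k)) :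
    StrictMono fun p => if p ∈ X then 2 * b p else 2 * a p + 1 := by
  intro p q hpq
  have hba : b p ≤ a q := (hab.2 p (by omega)).trans (ha.monotone (Fin.mk_le_mk.mpr hpq))
  have hab' : a p < b q := (hab.1 p).trans_lt (hb hpq)
  have := ha hpq
  have := hb hpq
  dsimp only
  split_ifs <;> omega

section CutStable

variable {M : Type*} [MetricSpace M]

lemma IsBddMap.exists_dist_le {α β : Type*} [Nonempty α] [Nonempty β] {f : α → M} {g : β → M}
    (hf : IsBddMap f) (hg : IsBddMap g) : ∃ R, ∀ x y, dist (f x) (g y) ≤ R := by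
  obtain ⟨Rf, hRf⟩ := hf
  obtain ⟨Rg, hRg⟩ := hg
  obtain ⟨x₀⟩ := ‹Nonempty α›
  obtain ⟨y₀⟩ := ‹Nonempty β›
  refine ⟨Rf + dist (f x₀) (g y₀) + Rg, fun x y => ?_⟩
  linarith [dist_triangle4 (f x) (f x₀) (g y₀) (g y), hRf x x₀, hRg y₀ y]

variable {l m : ℕ} {f : (Fin l → ℕ) → M} {g : (Fin m → ℕ) → M} {L : Set ℕ}
  {P : Finset (Fin (l + m))} {hP : P.card = l}

lemma dist_le_sSup_cutDistSet (hf : IsBddMap f) (hg : IsBddMap g) {n : Fin (l + m) → ℕ}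
    (hn : StrictMono n) (hnL : ∀ i, n i ∈ L) :
    dist (f (subTuple n P hP)) (g (subTuple n Pᶜ (compl_card P hP))) ≤
      sSup (cutDistSet f g L P hP) := by
  obtain ⟨R, hR⟩ := hf.exists_dist_le hg
  exact le_csSup ⟨R, by rintro _ ⟨n, -, -, rfl⟩; exact hR _ _⟩ ⟨n, hn, hnL, rfl⟩

lemma sInf_cutDistSet_le {n : Fin (l + m) → ℕ} (hn : StrictMono n) (hnL : ∀ i, n i ∈ L) :
    sInf (cutDistSet f g L P hP) ≤
      dist (f (subTuple n P hP)) (g (subTuple n Pᶜ (compl_card P hP))) :=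
  csInf_le ⟨0, by rintro _ ⟨n, -, -, rfl⟩; exact dist_nonneg⟩ ⟨n, hn, hnL, rfl⟩

/-- For interlacing `u ≤ v`, both `f(e(2u)|_P)` and `f(e(2v)|_P)` are `P`-cut partners of
`g(e(2u+1)|_{Pᶜ})`. -/
lemma dist_le_two_mul_sSup_cutDistSet (hf : IsBddMap f) (hg : IsBddMap g) {e : ℕ → ℕ}
    (he : StrictMono e) (heL : ∀ n, e n ∈ L) {u v : Fin (l + m) → ℕ} (hu : StrictMono u)
    (hv : StrictMono v) (huv : InterLE u v) :
    dist (f (subTuple (fun p => e (2 * u p)) P hP)) (f (subTuple (fun p => e (2 * v p)) P hP)) ≤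
      2 * sSup (cutDistSet f g L P hP) := by
  have key : ∀ a b : Fin (l + m) → ℕ, StrictMono a → StrictMono b → InterLE a b →
      dist (f (subTuple (fun p => e (2 * b p)) P hP))
        (g (subTuple (fun p => e (2 * a p + 1)) Pᶜ (compl_card P hP))) ≤
      sSup (cutDistSet f g L P hP) := by
    intro a b ha hb hab
    have hn := he.comp (hab.strictMono_cutMerge ha hb P)
    convert dist_le_sSup_cutDistSet hf hg hn fun _ => heL _ using 3 <;>
      funext i <;> simp only [subTuple, Function.comp_apply]
    · rw [if_pos (Finset.orderEmbOfFin_mem P hP i)]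
    · rw [if_neg (Finset.mem_compl.mp (Finset.orderEmbOfFin_mem Pᶜ _ i))]
  linarith [dist_triangle_right (f (subTuple (fun p => e (2 * u p)) P hP))
    (f (subTuple (fun p => e (2 * v p)) P hP))
    (g (subTuple (fun p => e (2 * u p + 1)) Pᶜ (compl_card P hP))),
    key u u hu hu (interLE_self hu.monotone), key u v hu hv huv]

end CutStable

section CutPattern

variable {k : ℕ} (e r : ℕ → ℕ)

def cutPattern (X : Finset (Fin k)) (p : Fin k) : ℕ :=
  e (2 * r (cutIndex X p) + if p ∈ X then 0 else 1)

variable {e r}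

lemma cutPattern_strictMono (he : StrictMono e) (hr : StrictMono r) (X : Finset (Fin k)) :
    StrictMono (cutPattern e r X) := fun p q hpq => by
  have := hr (cutIndex_strictMono X hpq)
  exact he (by split_ifs <;> omega)

lemma subTuple_cutPattern_compl {m : ℕ} (X : Finset (Fin k)) (hX : Xᶜ.card = m) :
    subTuple (cutPattern e r X) Xᶜ hX = fun j => e (2 * r ((k * k + 1) * (j.1 + 1)) + 1) := by
  funext j
  have hj := Finset.mem_compl.mp (Finset.orderEmbOfFin_mem Xᶜ hX j)
  simp only [subTuple, cutPattern, if_neg hj, cutIndex_orderEmbOfFin_compl]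

lemma exists_subTuple_eq_subTuple_cutPattern {l : ℕ} (X Y : Finset (Fin k)) (hX : X.card = l)
    (hY : Y.card = l) : ∃ τ : Fin k → ℕ, StrictMono τ ∧
      subTuple (fun p => e (2 * r (τ p))) Y hY = subTuple (cutPattern e r X) X hX := by
  obtain ⟨τ, hτ, hτY⟩ := exists_strictMono_comp_eq_cutIndex X Y hX hY
  refine ⟨τ, hτ, funext fun i => ?_⟩
  simp only [subTuple, cutPattern, hτY, if_pos (Finset.orderEmbOfFin_mem X hX i), add_zero]

end CutPattern

theorem HasPropQConst.cutStableWith {M : Type*} [MetricSpace M] {C : ℝ}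
    (hQ : HasPropQConst M C) : CutStableWith M (2 * C + 1) := by
  intro l m f g hf hg L₀ hL₀ P Q hP hQc
  set S := sSup (cutDistSet f g L₀ Q hQc)
  set e := Nat.nth (· ∈ L₀)
  have he : StrictMono e := Nat.nth_strictMono hL₀
  have heL : ∀ n, e n ∈ L₀ := Nat.nth_mem_of_infinite hL₀
  have hS : 0 ≤ S := dist_nonneg.trans
    (dist_le_sSup_cutDistSet hf hg (he.comp Fin.val_strictMono) fun p => heL p)
  let φ : IncTuple (l + m) → M := fun y => f (subTuple (fun p => e (2 * y.1 p)) Q hQc)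
  have hφ : ∀ u v, dist (φ u) (φ v) ≤ 2 * S * dI u v := dist_le_mul_dI_of_interlacing
    fun u v huv => huv.elim (dist_le_two_mul_sSup_cutDistSet hf hg he heL u.2 v.2) fun hvu =>
      dist_comm (φ u) (φ v) ▸ dist_le_two_mul_sSup_cutDistSet hf hg he heL v.2 u.2 hvu
  obtain ⟨L', hL', hconc⟩ := hQ _ φ (2 * S) (by positivity) hφ
  set r := Nat.nth (· ∈ L')
  have hr : StrictMono r := Nat.nth_strictMono hL'
  have hφ_eq : ∀ (X : Finset (Fin (l + m))) (hX : X.card = l),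
      ∃ y, memAll L' y ∧ φ y = f (subTuple (cutPattern e r X) X hX) := fun X hX => by
    obtain ⟨τ, hτ, hτX⟩ := exists_subTuple_eq_subTuple_cutPattern (e := e) (r := r) X Q hX hQc
    exact ⟨⟨r ∘ τ, hr.comp hτ⟩, fun p => Nat.nth_mem_of_infinite hL' _, congrArg f hτX⟩
  obtain ⟨yP, hyP, hφP⟩ := hφ_eq P hP
  obtain ⟨yQ, hyQ, hφQ⟩ := hφ_eq Q hQc
  have hcompl : subTuple (cutPattern e r P) Pᶜ (compl_card P hP) =
      subTuple (cutPattern e r Q) Qᶜ (compl_card Q hQc) := by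
    rw [subTuple_cutPattern_compl, subTuple_cutPattern_compl]
  calc sInf (cutDistSet f g L₀ P hP)
      ≤ dist (f (subTuple (cutPattern e r P) P hP))
          (g (subTuple (cutPattern e r P) Pᶜ (compl_card P hP))) :=
        sInf_cutDistSet_le (cutPattern_strictMono he hr P) fun _ => heL _
    _ ≤ dist (φ yP) (φ yQ) + dist (f (subTuple (cutPattern e r Q) Q hQc))
          (g (subTuple (cutPattern e r Q) Qᶜ (compl_card Q hQc))) := by
        rw [hφP, hφQ, ← hcompl]
        exact dist_triangle _ _ _
    _ ≤ C * (2 * S) + S := add_le_add (hconc yP yQ hyP hyQ)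
        (dist_le_sSup_cutDistSet hf hg (cutPattern_strictMono he hr Q) fun _ => heL _)
    _ = (2 * C + 1) * S := by ring

section PermCut

variable {l m : ℕ}

lemma OrderPreservingPerm.refl : OrderPreservingPerm (Equiv.refl (Fin (l + m))) :=
  ⟨Fin.strictMono_castAdd m, Fin.strictMono_natAdd l⟩

def permCut (π : Equiv.Perm (Fin (l + m))) : Finset (Fin (l + m)) :=
  Finset.univ.image fun i : Fin l => π (Fin.castAdd m i)

lemma card_permCut {π : Equiv.Perm (Fin (l + m))} (hπ : OrderPreservingPerm π) :
    (permCut π).card = l := by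
  rw [permCut, Finset.card_image_of_injective _ hπ.1.injective, Finset.card_univ,
    Fintype.card_fin]

lemma orderEmbOfFin_permCut {π : Equiv.Perm (Fin (l + m))} (hπ : OrderPreservingPerm π) :
    ⇑((permCut π).orderEmbOfFin (card_permCut hπ)) = fun i => π (Fin.castAdd m i) :=
  (Finset.orderEmbOfFin_unique _ (fun i => Finset.mem_image_of_mem _ (Finset.mem_univ i))
    hπ.1).symm

lemma orderEmbOfFin_compl_permCut {π : Equiv.Perm (Fin (l + m))} (hπ : OrderPreservingPerm π) :
    ⇑((permCut π)ᶜ.orderEmbOfFin (compl_card _ (card_permCut hπ))) =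
      fun j => π (Fin.natAdd l j) := by
  refine (Finset.orderEmbOfFin_unique _ (fun j => ?_) hπ.2).symm
  simp only [permCut, Finset.mem_compl, Finset.mem_image, Finset.mem_univ, true_and,
    EmbeddingLike.apply_eq_iff_eq, not_exists]
  intro i h
  have := congrArg Fin.val h
  simp only [Fin.val_castAdd, Fin.val_natAdd] at this
  omega

lemma permDistSet_eq_cutDistSet {M : Type*} [MetricSpace M] (f : (Fin l → ℕ) → M)
    (g : (Fin m → ℕ) → M) (L : Set ℕ) {π : Equiv.Perm (Fin (l + m))}
    (hπ : OrderPreservingPerm π) :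
    permDistSet f g L π = cutDistSet f g L (permCut π) (card_permCut hπ) := by
  unfold permDistSet cutDistSet subTuple
  rw [orderEmbOfFin_permCut hπ, orderEmbOfFin_compl_permCut hπ]

theorem CutStableWith.upperStableWith {M : Type*} [MetricSpace M] {C : ℝ}
    (h : CutStableWith M C) : UpperStableWith M C := by
  intro l m f g hf hg L hL π hπ
  rw [permDistSet_eq_cutDistSet f g L OrderPreservingPerm.refl,
    permDistSet_eq_cutDistSet f g L hπ]
  exact h l m f g hf hg L hL _ _ _ _

end PermCut

def altPerm (k : ℕ) : Equiv.Perm (Fin (k + k)) where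
  toFun p := if h : p.1 < k then ⟨2 * p.1, by omega⟩ else ⟨2 * (p.1 - k) + 1, by omega⟩
  invFun q := if h : q.1 % 2 = 0 then ⟨q.1 / 2, by omega⟩ else ⟨k + q.1 / 2, by omega⟩
  left_inv p := by
    have := p.isLt
    apply Fin.ext
    dsimp only
    split_ifs with h₁ h₂ h₂ <;> simp only at h₂ ⊢ <;> omega
  right_inv q := by
    have := q.isLt
    apply Fin.ext
    dsimp only
    split_ifs with h₁ h₂ h₂ <;> simp only at h₂ ⊢ <;> omega

lemma altPerm_castAdd (k : ℕ) (i : Fin k) : (altPerm k (Fin.castAdd k i)).1 = 2 * i.1 := by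
  simp [altPerm]

lemma altPerm_natAdd (k : ℕ) (j : Fin k) : (altPerm k (Fin.natAdd k j)).1 = 2 * j.1 + 1 := by
  simp [altPerm]

lemma orderPreservingPerm_altPerm (k : ℕ) : OrderPreservingPerm (altPerm k) :=
  ⟨fun i i' h => by simp only [Fin.lt_def, altPerm_castAdd] at h ⊢; omega,
    fun j j' h => by simp only [Fin.lt_def, altPerm_natAdd] at h ⊢; omega⟩

lemma interLE_altPerm {k : ℕ} {n : Fin (k + k) → ℕ} (hn : StrictMono n) :
    InterLE (fun i => n (altPerm k (Fin.castAdd k i))) (fun j => n (altPerm k (Fin.natAdd k j))) :=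
  ⟨fun i => (hn (by rw [Fin.lt_def, altPerm_castAdd, altPerm_natAdd]; omega)).le,
    fun i h => (hn (by rw [Fin.lt_def, altPerm_castAdd, altPerm_natAdd]; simp only; omega)).le⟩

def IncTuple.extend {α : Type*} {k : ℕ} (f : IncTuple k → α) (v : Fin k → ℕ) : α :=
  if h : StrictMono v then f ⟨v, h⟩ else f ⟨fun i => i.1, fun _ _ h => h⟩

lemma IncTuple.extend_of_strictMono {α : Type*} {k : ℕ} (f : IncTuple k → α) {v : Fin k → ℕ}
    (h : StrictMono v) : IncTuple.extend f v = f ⟨v, h⟩ :=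
  dif_pos h

section UpperStable

variable {M : Type*} [MetricSpace M]

lemma IncTuple.dist_extend_le {k : ℕ} {f : IncTuple k → M} {K : ℝ} (hK : 0 ≤ K)
    (hf : ∀ a b, dist (f a) (f b) ≤ K * dI a b) (v w : Fin k → ℕ) :
    dist (IncTuple.extend f v) (IncTuple.extend f w) ≤ K * (2 * k) := by
  have key : ∀ a b, dist (f a) (f b) ≤ K * (2 * k) := fun a b =>
    (hf a b).trans (mul_le_mul_of_nonneg_left (by exact_mod_cast dI_le_two_mul k a b) hK)
  unfold IncTuple.extend
  split_ifs <;> apply key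

theorem UpperStableWith.hasPropQConst {C : ℝ} (hC : 0 ≤ C) (hU : UpperStableWith M C) :
    HasPropQConst M (2 * C + 2) := by
  intro k f K hK hf
  rcases hK.eq_or_lt with rfl | hK
  · exact ⟨Set.univ, Set.infinite_univ, fun a b _ _ => by simpa using hf a b⟩
  set F := IncTuple.extend f
  have hF : IsBddMap F := ⟨_, IncTuple.dist_extend_le hK.le hf⟩
  have hF_eq : ∀ v (hv : StrictMono v), F v = f ⟨v, hv⟩ := fun _ => IncTuple.extend_of_strictMono f
  obtain ⟨L, hL, hclose⟩ := exists_infinite_forall_le_add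
    (fun n : Fin (k + k) → ℕ =>
      dist (F fun i => n (Fin.castAdd k i)) (F fun j => n (Fin.natAdd k j)))
    hK (fun n => ⟨dist_nonneg, IncTuple.dist_extend_le hK.le hf _ _⟩)
  set S₀ := permDistSet F F L (Equiv.refl _)
  have hsup : sSup (permDistSet F F L (altPerm k)) ≤ K := by
    refine Real.sSup_le ?_ hK.le
    rintro _ ⟨n, hn, -, rfl⟩
    have hI := interLE_altPerm hn
    rw [hF_eq (fun i => n (altPerm k (Fin.castAdd k i)))
        (hn.comp (orderPreservingPerm_altPerm k).1),
      hF_eq (fun j => n (altPerm k (Fin.natAdd k j)))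
        (hn.comp (orderPreservingPerm_altPerm k).2)]
    exact (hf _ _).trans (mul_le_of_le_one_right hK.le
      (by exact_mod_cast dI_le_one_of_interlacing (Or.inl hI)))
  have hinf : sInf S₀ ≤ C * K :=
    (hU k k F F hF hF L hL _ (orderPreservingPerm_altPerm k)).trans
      (mul_le_mul_of_nonneg_left hsup hC)
  have hS₀ : ∀ d ∈ S₀, d ≤ (C + 1) * K := by
    intro d hd
    obtain ⟨n, hn, hnL, -⟩ := hL.exists_strictMono_fin (k + k) 0
    have : d - K ≤ sInf S₀ := le_csInf ⟨_, n, hn, hnL, rfl⟩ (by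
      rintro _ ⟨n', hn', hn'L, rfl⟩
      obtain ⟨n, hn, hnL, rfl⟩ := hd
      simp only [Equiv.refl_apply]
      linarith [hclose n n' hn hn' hnL hn'L])
    linarith
  have habove : ∀ a w : IncTuple k, memAll L a → memAll L w → ordLT a w →
      dist (f a) (f w) ≤ (C + 1) * K := by
    intro a w ha hw haw
    have happ := strictMono_fin_append a.2 w.2 haw
    refine le_of_eq_of_le ?_ (hS₀ _ ⟨Fin.append a.1 w.1, happ, fun p => ?_, rfl⟩)
    · simp only [Equiv.refl_apply, Fin.append_left, Fin.append_right]
      exact congrArg₂ dist (hF_eq a.1 a.2).symm (hF_eq w.1 w.2).symm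
    · induction p using Fin.addCases with
      | left i => rw [Fin.append_left]; exact ha i
      | right j => rw [Fin.append_right]; exact hw j
  refine ⟨L, hL, fun a b ha hb => ?_⟩
  obtain ⟨t, ht⟩ := IncTuple.exists_forall_lt a b
  obtain ⟨w, hw, hwL, hwt⟩ := hL.exists_strictMono_fin k t
  calc dist (f a) (f b) ≤ dist (f a) (f ⟨w, hw⟩) + dist (f b) (f ⟨w, hw⟩) :=
        dist_triangle_right _ _ _
    _ ≤ (C + 1) * K + (C + 1) * K :=
        add_le_add (habove a _ ha hwL fun i j => (ht i).1.trans (hwt j))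
          (habove b _ hb hwL fun i j => (ht i).2.trans (hwt j))
    _ = (2 * C + 2) * K := by ring

end UpperStable

/-- Property `Q`, cut stability and upper stability are equivalent for metric spaces. -/
theorem stmt10 (M : Type*) [MetricSpace M] :
    (HasPropQ M ↔ ∃ C : ℝ, 1 ≤ C ∧ CutStableWith M C) ∧
    (HasPropQ M ↔ ∃ C : ℝ, 0 ≤ C ∧ UpperStableWith M C) := by
  have hQ_cut : HasPropQ M → ∃ C : ℝ, 1 ≤ C ∧ CutStableWith M C := fun ⟨C, hC, hQ⟩ =>
    ⟨2 * C + 1, by linarith, hQ.cutStableWith⟩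
  have hcut_upper : (∃ C : ℝ, 1 ≤ C ∧ CutStableWith M C) →
      ∃ C : ℝ, 0 ≤ C ∧ UpperStableWith M C := fun ⟨C, hC, h⟩ =>
    ⟨C, by linarith, h.upperStableWith⟩
  have hupper_Q : (∃ C : ℝ, 0 ≤ C ∧ UpperStableWith M C) → HasPropQ M := fun ⟨C, hC, h⟩ =>
    ⟨2 * C + 2, by linarith, h.hasPropQConst hC⟩
  exact ⟨⟨hQ_cut, hupper_Q ∘ hcut_upper⟩, ⟨hcut_upper ∘ hQ_cut, hupper_Q⟩⟩
end
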